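/- arXiv:2401.05657 — 4 statements merged into one kernel-verified Lean document; each statement's English description precedes it below -/
import Mathlib

section
/- For any profile P, the defensible set D(P) is nonempty; in particular, any alternative x minimizing the maximal margin against it, i.e., minimizing max_{y} Margin_P(y,x) (the Minimax winner), belongs to D(P). -/
open scoped Classical

/-- A profile assigns to each voter in a finite nonempty set of voters a
preference relation on the alternatives. -/
structure Profile (α V : Type*) where
  voters : Finset V
  pref : V → α → α → Prop
  voters_nonempty : voters.Nonempty

/-- The number of voters strictly preferring `x` to `y` (as an integer). -/
noncomputable def Profile.support {α V : Type*} (P : Profile α V) (x y : α) : ℤ :=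
  ((P.voters.filter fun i => P.pref i x y).card : ℤ)

/-- The majority margin of `x` over `y`. -/
noncomputable def Profile.margin {α V : Type*} (P : Profile α V) (x y : α) : ℤ :=
  P.support x y - P.support y x

/-- Every voter's preference is a strict linear order. -/
def Profile.linear {α V : Type*} (P : Profile α V) : Prop :=
  ∀ i ∈ P.voters,
    (∀ x, ¬ P.pref i x x) ∧
    (∀ x y z, P.pref i x y → P.pref i y z → P.pref i x z) ∧
    (∀ x y, x ≠ y → P.pref i x y ∨ P.pref i y x)

/-- Every voter's preference is a strict weak order. -/
def Profile.swo {α V : Type*} (P : Profile α V) : Prop :=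
  ∀ i ∈ P.voters,
    (∀ x, ¬ P.pref i x x) ∧
    (∀ x y z, P.pref i x y → P.pref i y z → P.pref i x z) ∧
    (∀ x y z, (¬ P.pref i x y ∧ ¬ P.pref i y x) → (¬ P.pref i y z ∧ ¬ P.pref i z y) →
      (¬ P.pref i x z ∧ ¬ P.pref i z x))

/-- The defensible set of a profile. -/
noncomputable def Profile.defensible {α V : Type*} (P : Profile α V) : Set α :=
  {x | ∀ y, ∃ z, P.margin y x ≤ P.margin z y}

namespace Profile

variable {α V : Type*} [Fintype α] [Nonempty α] (P : Profile α V)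

noncomputable def minimaxScore (x : α) : ℤ :=
  Finset.univ.sup' Finset.univ_nonempty fun y => P.margin y x

theorem margin_le_minimaxScore (x y : α) : P.margin y x ≤ P.minimaxScore x :=
  Finset.le_sup' (fun y => P.margin y x) (Finset.mem_univ y)

theorem exists_margin_eq_minimaxScore (y : α) : ∃ z, P.margin z y = P.minimaxScore y := by
  obtain ⟨z, -, hz⟩ := Finset.exists_mem_eq_sup' Finset.univ_nonempty fun z => P.margin z y
  exact ⟨z, hz.symm⟩

theorem exists_minimaxScore_le : ∃ x, ∀ x', P.minimaxScore x ≤ P.minimaxScore x' :=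
  Finite.exists_min P.minimaxScore

theorem mem_defensible_of_minimaxScore_le {x : α}
    (hx : ∀ x', P.minimaxScore x ≤ P.minimaxScore x') : x ∈ P.defensible := by
  intro y
  obtain ⟨z, hz⟩ := P.exists_margin_eq_minimaxScore y
  exact ⟨z, hz ▸ (P.margin_le_minimaxScore x y).trans (hx y)⟩

end Profile

theorem defensible_nonempty_and_minimax_mem_general {α V : Type*} [Fintype α] [Nonempty α]
    (P : Profile α V) :
    P.defensible.Nonempty ∧
      ∀ x : α,
        (∀ x' : α,
          (Finset.univ.sup' Finset.univ_nonempty fun y => P.margin y x) ≤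
            (Finset.univ.sup' Finset.univ_nonempty fun y => P.margin y x')) →
        x ∈ P.defensible :=
  ⟨P.exists_minimaxScore_le.imp fun _ => P.mem_defensible_of_minimaxScore_le,
    fun _ => P.mem_defensible_of_minimaxScore_le⟩

/-- The defensible set is nonempty; indeed any Minimax winner
(minimizer of the maximal margin against it) is in the defensible set. -/
theorem defensible_nonempty_and_minimax_mem {α V : Type*} [Fintype α] [Nonempty α]
    (P : Profile α V) (hswo : P.swo) :
    P.defensible.Nonempty ∧
      ∀ x : α,
        (∀ x' : α,
          (Finset.univ.sup' Finset.univ_nonempty fun y => P.margin y x) ≤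
            (Finset.univ.sup' Finset.univ_nonempty fun y => P.margin y x')) →
        x ∈ P.defensible :=
  defensible_nonempty_and_minimax_mem_general P
end

section
/- Any voting method F satisfying positive involvement and the Condorcet winner criterion refines the defensible set on linear profiles: for every linear profile P, F(P) ⊆ D(P). -/
open scoped Classical

/-- rank function putting `x` first, `y` second. -/
noncomputable def rk {α : Type*} [Fintype α] (x y u : α) : ℕ :=
  if u = x then 0 else if u = y then 1 else ((Fintype.equivFin α) u : ℕ) + 2

lemma rk_inj {α : Type*} [Fintype α] {x y u v : α} (hxy : x ≠ y)
    (h : rk x y u = rk x y v) : u = v := by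
  unfold rk at h
  by_cases hux : u = x <;> by_cases hvx : v = x <;>
    by_cases huy : u = y <;> by_cases hvy : v = y <;>
    simp_all
  exact (Fintype.equivFin α).injective (Fin.val_injective h)

lemma rk_x {α : Type*} [Fintype α] (x y : α) : rk x y x = 0 := by simp [rk]

lemma rk_y {α : Type*} [Fintype α] {x y : α} (hxy : y ≠ x) : rk x y y = 1 := by
  simp [rk, hxy]

lemma rk_pos {α : Type*} [Fintype α] {x y u : α} (h : u ≠ x) : 1 ≤ rk x y u := by
  unfold rk; simp [h]; split <;> omega

lemma rk_two {α : Type*} [Fintype α] {x y u : α} (hux : u ≠ x) (huy : u ≠ y) :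
    2 ≤ rk x y u := by
  unfold rk; simp [hux, huy]

/-- Add a set of voters all with preference relation `r`. -/
noncomputable def addVoters {α V : Type*} (P : Profile α V) (S : Finset V)
    (r : α → α → Prop) : Profile α V :=
  ⟨P.voters ∪ S, fun i => if i ∈ S then r else P.pref i,
   P.voters_nonempty.mono Finset.subset_union_left⟩

lemma addVoters_empty {α V : Type*} (P : Profile α V) (r : α → α → Prop) :
    addVoters P ∅ r = P := by
  cases P; simp [addVoters]

lemma addVoters_support {α V : Type*} (P : Profile α V) (S : Finset V)
    (r : α → α → Prop) (hd : Disjoint P.voters S) (u v : α) :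
    (addVoters P S r).support u v
      = P.support u v + (if r u v then (S.card : ℤ) else 0) := by
  unfold Profile.support addVoters
  simp only
  rw [Finset.filter_union, Finset.card_union_of_disjoint
      (hd.mono (Finset.filter_subset _ _) (Finset.filter_subset _ _))]
  have h1 : P.voters.filter (fun i => (if i ∈ S then r else P.pref i) u v)
      = P.voters.filter (fun i => P.pref i u v) := by
    apply Finset.filter_congr
    intro i hi
    have : i ∉ S := Finset.disjoint_left.mp hd hi
    simp [this]
  have h2 : (S.filter (fun i => (if i ∈ S then r else P.pref i) u v)).card
      = if r u v then S.card else 0 := by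
    by_cases h : r u v
    · rw [if_pos h, Finset.filter_true_of_mem (fun i hi => by simp [hi, h])]
    · rw [if_neg h, Finset.filter_false_of_mem (fun i hi => by simp [hi, h]),
        Finset.card_empty]
  rw [h1, h2]
  push_cast
  split <;> simp

lemma addVoters_margin {α V : Type*} (P : Profile α V) (S : Finset V)
    (r : α → α → Prop) (hd : Disjoint P.voters S) (u v : α)
    (huv : r u v) (hvu : ¬ r v u) :
    (addVoters P S r).margin u v = P.margin u v + S.card := by
  unfold Profile.margin
  rw [addVoters_support P S r hd, addVoters_support P S r hd]
  simp [huv, hvu]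
  ring

/-- In a linear profile, opposite supports sum to the number of voters. -/
lemma linear_support_add {α V : Type*} (P : Profile α V) (hP : P.linear)
    {u v : α} (huv : u ≠ v) :
    P.support u v + P.support v u = P.voters.card := by
  unfold Profile.support
  rw [← Nat.cast_add]
  congr 1
  have : P.voters.filter (fun i => P.pref i v u)
      = P.voters.filter (fun i => ¬ P.pref i u v) := by
    apply Finset.filter_congr
    intro i hi
    obtain ⟨hirr, htr, htot⟩ := hP i hi
    constructor
    · intro h h'
      exact hirr u (htr u v u h' h)
    · intro h
      rcases htot u v huv with h' | h'
      · exact absurd h' h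
      · exact h'
  rw [this, Finset.card_filter_add_card_filter_not]

lemma linear_margin_parity {α V : Type*} (P : Profile α V) (hP : P.linear)
    {u v : α} (huv : u ≠ v) :
    P.margin u v = P.voters.card - 2 * P.support v u := by
  have := linear_support_add P hP huv
  unfold Profile.margin
  omega

theorem refines_defensible_of_posInv_condorcet' {α V : Type*} [Fintype α] [Nonempty α]
    [Infinite V] (F : Profile α V → Set α)
    (hne : ∀ P : Profile α V, P.linear → (F P).Nonempty)
    (hPI : ∀ (P P' : Profile α V) (j : V) (x : α), P.linear → P'.linear →
      j ∉ P.voters → P'.voters = insert j P.voters →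
      (∀ i ∈ P.voters, ∀ u v : α, P'.pref i u v ↔ P.pref i u v) →
      (∀ y : α, y ≠ x → P'.pref j x y) →
      x ∈ F P → x ∈ F P')
    (hCW : ∀ (P : Profile α V) (x : α), P.linear →
      (∀ y : α, y ≠ x → 0 < P.margin x y) → F P = {x}) :
    ∀ P : Profile α V, P.linear → F P ⊆ {x | ∀ y, ∃ z, P.margin y x ≤ P.margin z y} := by
  intro P hP x hx
  by_contra hxD
  simp only [Set.mem_setOf_eq, not_forall, not_exists, not_le] at hxD
  obtain ⟨y, hy⟩ := hxD
  -- hy : ∀ z, P.margin z y < P.margin y x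
  set M : ℤ := P.margin y x with hM
  have hM0 : 0 < M := by
    have := hy y
    simpa [Profile.margin, sub_self] using this
  have hyx : y ≠ x := by
    intro h
    rw [hM] at hM0
    subst h
    simp [Profile.margin] at hM0
  -- the preference of new voters
  set r : α → α → Prop := fun u v => rk x y u < rk x y v with hr
  have hr_lin : ∀ i : V, (∀ u, ¬ r u u) ∧ (∀ u v w, r u v → r v w → r u w) ∧
      (∀ u v, u ≠ v → r u v ∨ r v u) := by
    intro i
    refine ⟨fun u => lt_irrefl _, fun u v w h1 h2 => h1.trans h2, fun u v huv => ?_⟩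
    rcases lt_or_gt_of_ne (fun h => huv (rk_inj hyx.symm h)) with h | h
    · exact Or.inl h
    · exact Or.inr h
  have hlin : ∀ T : Finset V, Disjoint P.voters T → (addVoters P T r).linear := by
    intro T hd i hi
    by_cases hiT : i ∈ T
    · simpa [addVoters, hiT] using hr_lin i
    · have hiP : i ∈ P.voters := by
        rcases Finset.mem_union.mp hi with h | h
        · exact h
        · exact absurd h hiT
      simpa [addVoters, hiT] using hP i hiP
  -- positive involvement induction
  have key : ∀ T : Finset V, ↑T ⊆ ((P.voters : Set V))ᶜ → x ∈ F (addVoters P T r) := by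
    intro T
    induction T using Finset.induction_on with
    | empty => intro _; rw [addVoters_empty]; exact hx
    | insert _ _ hj =>
      rename_i j T ih
      intro hsub
      have hsubT : ↑T ⊆ ((P.voters : Set V))ᶜ := by
        intro i hi; exact hsub (by simp [hi])
      have hjP : j ∉ P.voters := by
        have := hsub (by simp : j ∈ (↑(insert j T) : Set V))
        simpa using this
      have hdT : Disjoint P.voters T := by
        rw [Finset.disjoint_right]
        intro i hi
        have := hsubT hi
        simpa using this
      have hdT' : Disjoint P.voters (insert j T) := by
        rw [Finset.disjoint_right]
        intro i hi h2
        have := hsub (by simpa using hi)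
        simp at this
        exact this h2
      refine hPI (addVoters P T r) (addVoters P (insert j T) r) j x
        (hlin T hdT) (hlin _ hdT') ?_ ?_ ?_ ?_ (ih hsubT)
      · simp [addVoters, hjP, hj]
      · simp [addVoters, Finset.union_insert]
      · intro i hi u v
        rcases Finset.mem_union.mp hi with hiP | hiT
        · have hij : i ≠ j := fun h => hjP (h ▸ hiP)
          have hiT : i ∉ T := Finset.disjoint_left.mp hdT hiP
          simp [addVoters, hij, hiT]
        · simp [addVoters, hiT, Finset.mem_insert_of_mem hiT]
      · intro z hz
        have : r x z := by
          have h1 := rk_pos (y := y) hz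
          show rk x y x < rk x y z
          rw [rk_x]
          omega
        simpa [addVoters] using this
  -- choose M - 1 fresh voters
  obtain ⟨S, hSsub, hScard⟩ :=
    (Set.Finite.infinite_compl (P.voters.finite_toSet)).exists_subset_card_eq
      (M - 1).toNat
  have hdS : Disjoint P.voters S := by
    rw [Finset.disjoint_right]
    intro i hi
    have := hSsub hi
    simpa using this
  have hScardZ : (S.card : ℤ) = M - 1 := by rw [hScard]; omega
  have hxF : x ∈ F (addVoters P S r) := key S hSsub
  -- y is a Condorcet winner in the new profile
  have hCond : ∀ w : α, w ≠ y → 0 < (addVoters P S r).margin y w := by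
    intro w hw
    by_cases hwx : w = x
    · subst hwx
      have hrxy : r w y := by
        show rk w y w < rk w y y
        rw [rk_x, rk_y hyx]
        omega
      have hryx : ¬ r y w := by
        show ¬ rk w y y < rk w y w
        rw [rk_x, rk_y hyx]
        omega
      have h1 : (addVoters P S r).margin w y = P.margin w y + S.card :=
        addVoters_margin P S r hdS w y hrxy hryx
      have h2 : (addVoters P S r).margin y w = -(addVoters P S r).margin w y := by
        unfold Profile.margin; ring
      have h3 : P.margin w y = - P.margin y w := by
        unfold Profile.margin; ring
      rw [h2, h1, h3]
      omega
    · -- w ≠ x, w ≠ y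
      have hryw : r y w := by
        show rk x y y < rk x y w
        have h1 := rk_two hwx hw
        rw [rk_y hyx]
        omega
      have hrwy : ¬ r w y := by
        show ¬ rk x y w < rk x y y
        have h1 := rk_two hwx hw
        rw [rk_y hyx]
        omega
      rw [addVoters_margin P S r hdS y w hryw hrwy, hScardZ]
      -- need P.margin y w ≥ 2 - M via parity
      have hp1 := linear_margin_parity P hP (show y ≠ w from fun h => hw h.symm)
      have hp2 := linear_margin_parity P hP hyx
      have hzw := hy w
      have hmwy : P.margin w y = - P.margin y w := by
        unfold Profile.margin; ring
      rw [hmwy] at hzw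
      -- P.margin y w ≡ card ≡ M (mod 2), P.margin y w > -M ⟹ ≥ 2 - M
      omega
  have heq := hCW (addVoters P S r) y (hlin S hdS) hCond
  rw [heq] at hxF
  simp only [Set.mem_singleton_iff] at hxF
  exact hyx hxF.symm

/-- Any voting method satisfying positive involvement and the
Condorcet winner criterion refines the defensible set on linear profiles. -/
theorem refines_defensible_of_posInv_condorcet {α V : Type*} [Fintype α] [Nonempty α]
    [Infinite V] (F : Profile α V → Set α)
    (hne : ∀ P : Profile α V, P.linear → (F P).Nonempty)
    -- positive involvement
    (hPI : ∀ (P P' : Profile α V) (j : V) (x : α), P.linear → P'.linear →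
      j ∉ P.voters → P'.voters = insert j P.voters →
      (∀ i ∈ P.voters, ∀ u v : α, P'.pref i u v ↔ P.pref i u v) →
      (∀ y : α, y ≠ x → P'.pref j x y) →
      x ∈ F P → x ∈ F P')
    -- Condorcet winner criterion
    (hCW : ∀ (P : Profile α V) (x : α), P.linear →
      (∀ y : α, y ≠ x → 0 < P.margin x y) → F P = {x}) :
    ∀ P : Profile α V, P.linear → F P ⊆ P.defensible := by
  intro P hP
  exact refines_defensible_of_posInv_condorcet' F hne hPI hCW P hP
end

section
/- Any voting method F satisfying positive involvement and the weak Condorcet winner criterion refines the defensible set on all profiles (with strict weak order preferences): for every profile P, F(P) ⊆ D(P). -/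
/-! If `x ∈ F P` is not defensible, some `y` beats `x` by a margin `m > 0` larger than every
margin over `y`. Adding `m - 1` voters who rank `x` first, `y` second and tie the rest keeps `x`
in `F` by positive involvement. Afterwards `y` beats `x` by `1` and loses to nobody, since every
margin over `y` was at most `m - 1`; so `y` is a weak Condorcet winner and `x`, losing to `y`, is
not, contradicting the weak Condorcet winner criterion. -/

open scoped Classical

namespace Profile

variable {α V : Type*}

theorem margin_swap (P : Profile α V) (x y : α) : P.margin y x = -P.margin x y := by
  simp only [margin]; ring

theorem margin_self (P : Profile α V) (x : α) : P.margin x x = 0 :=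
  sub_self _

def IsWeakCondorcetWinner (P : Profile α V) (x : α) : Prop :=
  ∀ y, y ≠ x → 0 ≤ P.margin x y

theorem notMem_defensible_iff {P : Profile α V} {x : α} :
    x ∉ P.defensible ↔ ∃ y, ∀ z, P.margin z y < P.margin y x := by
  simp [defensible]

noncomputable def addVoter (P : Profile α V) (j : V) (R : α → α → Prop) : Profile α V where
  voters := insert j P.voters
  pref := Function.update P.pref j R
  voters_nonempty := Finset.insert_nonempty _ _

variable {P : Profile α V} {i j : V} {R : α → α → Prop}

theorem addVoter_pref_self : (P.addVoter j R).pref j = R := by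
  simp [addVoter]

theorem addVoter_pref_of_ne (h : i ≠ j) : (P.addVoter j R).pref i = P.pref i := by
  simp [addVoter, h]

theorem addVoter_support (hj : j ∉ P.voters) (u v : α) :
    (P.addVoter j R).support u v = P.support u v + if R u v then 1 else 0 := by
  have hold : (P.voters.filter fun i => (P.addVoter j R).pref i u v)
      = P.voters.filter fun i => P.pref i u v :=
    Finset.filter_congr fun i hi => by rw [addVoter_pref_of_ne (ne_of_mem_of_not_mem hi hj)]
  have hnew : j ∉ P.voters.filter fun i => P.pref i u v := fun h => hj (Finset.mem_filter.1 h).1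
  have hvoters : (P.addVoter j R).voters = insert j P.voters := rfl
  simp only [support, hvoters, Finset.filter_insert, addVoter_pref_self, hold]
  split_ifs <;> simp [Finset.card_insert_of_notMem hnew]

noncomputable def ballotMargin (R : α → α → Prop) (u v : α) : ℤ :=
  (if R u v then 1 else 0) - (if R v u then 1 else 0)

theorem addVoter_margin (hj : j ∉ P.voters) (u v : α) :
    (P.addVoter j R).margin u v = P.margin u v + ballotMargin R u v := by
  simp only [margin, ballotMargin, addVoter_support hj]; ring

theorem swo_addVoter (hP : P.swo) [IsStrictWeakOrder α R] :
    (P.addVoter j R).swo := by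
  intro i hi
  by_cases hij : i = j
  · subst hij
    rw [addVoter_pref_self]
    exact ⟨irrefl, fun _ _ _ => _root_.trans, IsStrictWeakOrder.incomp_trans⟩
  · rw [addVoter_pref_of_ne hij]
    exact hP i ((Finset.mem_insert.1 hi).resolve_left hij)

def podium (x y : α) : α → α → Prop :=
  Function.onFun (· < ·) fun u => if u = x then 0 else if u = y then 1 else (2 : ℕ)

instance (x y : α) : IsStrictWeakOrder α (podium x y) :=
  have : IsStrictWeakOrder ℕ (· < ·) := isStrictWeakOrder_of_isOrderConnected
  inferInstanceAs (IsStrictWeakOrder α (Function.onFun (· < ·) _))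

theorem podium_top {x y z : α} (hz : z ≠ x) : podium x y x z := by
  simp only [podium, Function.onFun, if_neg hz]
  split_ifs <;> omega

theorem ballotMargin_podium_top {x y : α} (hxy : x ≠ y) : ballotMargin (podium x y) x y = 1 := by
  simp [ballotMargin, podium, Function.onFun, hxy.symm]

theorem ballotMargin_podium_second {x y z : α} (hzx : z ≠ x) (hzy : z ≠ y) (hxy : x ≠ y) :
    ballotMargin (podium x y) y z = 1 := by
  simp [ballotMargin, podium, Function.onFun, hzx, hzy, hxy.symm]

theorem isWeakCondorcetWinner_of_add_podium {P P' : Profile α V} {x y : α} (hxy : x ≠ y)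
    (hy : ∀ z, P.margin z y < P.margin y x) {n : ℕ} (hn : (n : ℤ) = P.margin y x - 1)
    (hP' : ∀ u v, P'.margin u v = P.margin u v + n * ballotMargin (podium x y) u v) :
    P'.IsWeakCondorcetWinner y ∧ P'.margin x y < 0 := by
  have hxy' : P'.margin x y = -1 := by
    rw [hP', ballotMargin_podium_top hxy]
    linarith [P.margin_swap x y]
  refine ⟨fun z hzy => ?_, by omega⟩
  by_cases hzx : z = x
  · rw [hzx, P'.margin_swap, hxy']
    omega
  · rw [hP', ballotMargin_podium_second hzx hzy hxy]
    linarith [hy z, P.margin_swap y z]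

end Profile

open Profile

def PositiveInvolvement {α V : Type*} (F : Profile α V → Set α) : Prop :=
  ∀ (P P' : Profile α V) (j : V) (x : α), P.swo → P'.swo →
    j ∉ P.voters → P'.voters = insert j P.voters →
    (∀ i ∈ P.voters, ∀ u v : α, P'.pref i u v ↔ P.pref i u v) →
    (∀ y : α, y ≠ x → P'.pref j x y) →
    x ∈ F P → x ∈ F P'

theorem PositiveInvolvement.exists_add_ballots {α V : Type*} [Infinite V]
    {F : Profile α V → Set α} (hF : PositiveInvolvement F) (R : α → α → Prop)
    [IsStrictWeakOrder α R] {x : α} (hRx : ∀ y, y ≠ x → R x y) (n : ℕ) {P : Profile α V}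
    (hP : P.swo) (hx : x ∈ F P) :
    ∃ P' : Profile α V, P'.swo ∧ x ∈ F P' ∧
      ∀ u v, P'.margin u v = P.margin u v + n * ballotMargin R u v := by
  induction n with
  | zero => exact ⟨P, hP, hx, by simp⟩
  | succ n ih =>
    obtain ⟨Q, hQ, hxQ, hQm⟩ := ih
    obtain ⟨j, hj⟩ := Infinite.exists_notMem_finset Q.voters
    have hQ' : (Q.addVoter j R).swo := Q.swo_addVoter hQ
    refine ⟨Q.addVoter j R, hQ', hF Q _ j x hQ hQ' hj rfl ?_ ?_ hxQ, fun u v => ?_⟩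
    · intro i hi u v
      rw [addVoter_pref_of_ne (ne_of_mem_of_not_mem hi hj)]
    · intro y hy
      rw [addVoter_pref_self]
      exact hRx y hy
    · rw [addVoter_margin hj, hQm]
      push_cast
      ring

theorem refines_defensible_of_posInv_weakCondorcet_general {α V : Type*}
    [Infinite V] (F : Profile α V → Set α)
    -- positive involvement
    (hPI : ∀ (P P' : Profile α V) (j : V) (x : α), P.swo → P'.swo →
      j ∉ P.voters → P'.voters = insert j P.voters →
      (∀ i ∈ P.voters, ∀ u v : α, P'.pref i u v ↔ P.pref i u v) →
      (∀ y : α, y ≠ x → P'.pref j x y) →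
      x ∈ F P → x ∈ F P')
    -- weak Condorcet winner criterion
    (hWCW : ∀ P : Profile α V, P.swo →
      (∃ x : α, ∀ y : α, y ≠ x → 0 ≤ P.margin x y) →
      ∀ x ∈ F P, ∀ y : α, y ≠ x → 0 ≤ P.margin x y) :
    ∀ P : Profile α V, P.swo → F P ⊆ P.defensible := by
  intro P hP x hx
  by_contra hxD
  obtain ⟨y, hy⟩ := notMem_defensible_iff.1 hxD
  have hxy : x ≠ y := by
    rintro rfl
    exact lt_irrefl _ (hy x)
  obtain ⟨n, hn⟩ : ∃ n : ℕ, (n : ℤ) = P.margin y x - 1 :=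
    ⟨_, Int.toNat_of_nonneg (by linarith [hy y, P.margin_self y])⟩
  obtain ⟨P', hP', hxP', hP'margin⟩ := PositiveInvolvement.exists_add_ballots hPI (podium x y)
    (fun _ => podium_top) n hP hx
  obtain ⟨hyP', hxyP'⟩ := isWeakCondorcetWinner_of_add_podium hxy hy hn hP'margin
  exact (hWCW P' hP' ⟨y, hyP'⟩ x hxP' y hxy.symm).not_gt hxyP'

/-- Any voting method satisfying positive involvement and the weak
Condorcet winner criterion refines the defensible set on all profiles. -/
theorem refines_defensible_of_posInv_weakCondorcet {α V : Type*} [Fintype α] [Nonempty α]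
    [Infinite V] (F : Profile α V → Set α)
    (hne : ∀ P : Profile α V, P.swo → (F P).Nonempty)
    -- positive involvement
    (hPI : ∀ (P P' : Profile α V) (j : V) (x : α), P.swo → P'.swo →
      j ∉ P.voters → P'.voters = insert j P.voters →
      (∀ i ∈ P.voters, ∀ u v : α, P'.pref i u v ↔ P.pref i u v) →
      (∀ y : α, y ≠ x → P'.pref j x y) →
      x ∈ F P → x ∈ F P')
    -- weak Condorcet winner criterion
    (hWCW : ∀ P : Profile α V, P.swo →
      (∃ x : α, ∀ y : α, y ≠ x → 0 ≤ P.margin x y) →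
      ∀ x ∈ F P, ∀ y : α, y ≠ x → 0 ≤ P.margin x y) :
    ∀ P : Profile α V, P.swo → F P ⊆ P.defensible :=
  refines_defensible_of_posInv_weakCondorcet_general F hPI hWCW
end

section
/- If a voting method F satisfies ordinal margin invariance and single-voter resolvability, then F selects a unique winner on any profile whose ordinal margin graph is a linearly edge-ordered tournament (all pairwise margins are nonzero and pairwise distinct in absolute value). -/
open scoped Classical

/-- Two profiles have the same ordinal margin graph: same positive-margin edges,
and the same ordering of edges by margin size. -/
noncomputable def omgEq {α V W : Type*} (P : Profile α V) (P' : Profile α W) : Prop :=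
  (∀ x y : α, 0 < P.margin x y ↔ 0 < P'.margin x y) ∧
  (∀ x y z w : α, 0 < P.margin x y → 0 < P.margin z w →
    (P.margin x y < P.margin z w ↔ P'.margin x y < P'.margin z w))


private lemma card_filter_equiv_aux {V : Type*} {s t : Finset V} (e : ↥s ≃ ↥t) (p : V → Prop) :
    (s.filter fun i => ∃ h : i ∈ s, p ((e ⟨i, h⟩ : ↥t) : V)).card = (t.filter p).card := by
  apply Finset.card_bij (fun a ha => ((e ⟨a, (Finset.mem_filter.mp ha).1⟩ : ↥t) : V))
  · intro a ha
    obtain ⟨h1, h1', hp⟩ := Finset.mem_filter.mp ha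
    exact Finset.mem_filter.mpr ⟨(e ⟨a, h1⟩).2, hp⟩
  · intro a1 ha1 a2 ha2 h
    have := e.injective (Subtype.ext h)
    exact congrArg Subtype.val this
  · intro b hb
    obtain ⟨hb1, hb2⟩ := Finset.mem_filter.mp hb
    refine ⟨(e.symm ⟨b, hb1⟩ : V), Finset.mem_filter.mpr ⟨(e.symm ⟨b, hb1⟩).2, ?_⟩, ?_⟩
    · refine ⟨(e.symm ⟨b, hb1⟩).2, ?_⟩
      have : e ⟨((e.symm ⟨b, hb1⟩ : ↥s) : V), (e.symm ⟨b, hb1⟩).2⟩ = ⟨b, hb1⟩ := by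
        rw [Subtype.coe_eta]; exact e.apply_symm_apply _
      rw [this]; exact hb2
    · have : e ⟨((e.symm ⟨b, hb1⟩ : ↥s) : V), (e.symm ⟨b, hb1⟩).2⟩ = ⟨b, hb1⟩ := by
        rw [Subtype.coe_eta]; exact e.apply_symm_apply _
      rw [this]

private lemma support_mk {α V : Type*} (s : Finset V) (p : V → α → α → Prop)
    (h : s.Nonempty) (x y : α) :
    (Profile.mk s p h).support x y = ((s.filter fun i => p i x y).card : ℤ) := rfl

private lemma exists_tripled {α V : Type*} [Infinite V] (P : Profile α V) :
    ∃ Q : Profile α V, ∀ x y : α, Q.margin x y = 3 * P.margin x y := by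
  classical
  have hinf : ((↑P.voters : Set V)ᶜ).Infinite := (P.voters.finite_toSet).infinite_compl
  obtain ⟨t, htsub, htcard⟩ := hinf.exists_subset_card_eq (2 * P.voters.card)
  obtain ⟨t1, ht1sub, ht1card⟩ := Finset.exists_subset_card_eq (s := t) (n := P.voters.card) (by omega)
  set t2 := t \ t1 with ht2def
  have ht2card : t2.card = P.voters.card := by
    rw [ht2def, Finset.card_sdiff_of_subset ht1sub]; omega
  have hd1 : Disjoint P.voters t1 := by
    rw [Finset.disjoint_left]
    intro i hi hi1
    exact (htsub (ht1sub hi1)) hi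
  have hd2 : Disjoint P.voters t2 := by
    rw [Finset.disjoint_left]
    intro i hi hi2
    exact (htsub (Finset.sdiff_subset hi2)) hi
  have hd12 : Disjoint t1 t2 := Finset.disjoint_sdiff
  have e1 : ↥t1 ≃ ↥P.voters := Finset.equivOfCardEq (by omega)
  have e2 : ↥t2 ≃ ↥P.voters := Finset.equivOfCardEq (by omega)
  have hQne : ((P.voters ∪ t1) ∪ t2).Nonempty := by
    obtain ⟨i, hi⟩ := P.voters_nonempty
    exact ⟨i, by simp [hi]⟩
  refine ⟨⟨(P.voters ∪ t1) ∪ t2,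
    fun i x y => (i ∈ P.voters ∧ P.pref i x y) ∨
      (∃ h : i ∈ t1, P.pref ((e1 ⟨i, h⟩ : ↥P.voters) : V) x y) ∨
      (∃ h : i ∈ t2, P.pref ((e2 ⟨i, h⟩ : ↥P.voters) : V) x y),
    hQne⟩, ?_⟩
  · intro x y
    have hsup : ∀ u v : α, Profile.support (α := α) (V := V) ⟨(P.voters ∪ t1) ∪ t2,
        fun i x y => (i ∈ P.voters ∧ P.pref i x y) ∨
          (∃ h : i ∈ t1, P.pref ((e1 ⟨i, h⟩ : ↥P.voters) : V) x y) ∨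
          (∃ h : i ∈ t2, P.pref ((e2 ⟨i, h⟩ : ↥P.voters) : V) x y),
        hQne⟩ u v = 3 * P.support u v := by
      intro u v
      rw [support_mk]
      rw [Finset.filter_union, Finset.filter_union]
      rw [Finset.card_union_of_disjoint, Finset.card_union_of_disjoint]
      · have h0 : @Finset.filter V (fun i =>
            (i ∈ P.voters ∧ P.pref i u v) ∨
            (∃ h : i ∈ t1, P.pref ((e1 ⟨i, h⟩ : ↥P.voters) : V) u v) ∨
            (∃ h : i ∈ t2, P.pref ((e2 ⟨i, h⟩ : ↥P.voters) : V) u v))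
            (fun a => Classical.propDecidable _) P.voters =
            Finset.filter (fun i => P.pref i u v) P.voters := by
          ext i
          simp only [Finset.mem_filter]
          refine and_congr_right fun hi => ?_
          constructor
          · rintro (⟨_, h⟩ | ⟨h, _⟩ | ⟨h, _⟩)
            · exact h
            · exact absurd hi (Finset.disjoint_right.mp hd1 h)
            · exact absurd hi (Finset.disjoint_right.mp hd2 h)
          · intro h; exact Or.inl ⟨hi, h⟩
        have h1 : @Finset.filter V (fun i =>
            (i ∈ P.voters ∧ P.pref i u v) ∨
            (∃ h : i ∈ t1, P.pref ((e1 ⟨i, h⟩ : ↥P.voters) : V) u v) ∨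
            (∃ h : i ∈ t2, P.pref ((e2 ⟨i, h⟩ : ↥P.voters) : V) u v))
            (fun a => Classical.propDecidable _) t1 =
            Finset.filter (fun i => ∃ h : i ∈ t1, P.pref ((e1 ⟨i, h⟩ : ↥P.voters) : V) u v) t1 := by
          ext i
          simp only [Finset.mem_filter]
          refine and_congr_right fun hi => ?_
          constructor
          · rintro (⟨h, _⟩ | h | ⟨h, _⟩)
            · exact absurd hi (Finset.disjoint_left.mp hd1 h)
            · exact h
            · exact absurd h (Finset.disjoint_left.mp hd12 hi)
          · intro h; exact Or.inr (Or.inl h)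
        have h2 : @Finset.filter V (fun i =>
            (i ∈ P.voters ∧ P.pref i u v) ∨
            (∃ h : i ∈ t1, P.pref ((e1 ⟨i, h⟩ : ↥P.voters) : V) u v) ∨
            (∃ h : i ∈ t2, P.pref ((e2 ⟨i, h⟩ : ↥P.voters) : V) u v))
            (fun a => Classical.propDecidable _) t2 =
            Finset.filter (fun i => ∃ h : i ∈ t2, P.pref ((e2 ⟨i, h⟩ : ↥P.voters) : V) u v) t2 := by
          ext i
          simp only [Finset.mem_filter]
          refine and_congr_right fun hi => ?_
          constructor
          · rintro (⟨h, _⟩ | ⟨h, _⟩ | h)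
            · exact absurd hi (Finset.disjoint_left.mp hd2 h)
            · exact absurd h (Finset.disjoint_right.mp hd12 hi)
            · exact h
          · intro h; exact Or.inr (Or.inr h)
        rw [h0, h1, h2]
        have hc1 : (Finset.filter
            (fun i => ∃ h : i ∈ t1, P.pref ((e1 ⟨i, h⟩ : ↥P.voters) : V) u v) t1).card =
            (Finset.filter (fun i => P.pref i u v) P.voters).card :=
          card_filter_equiv_aux e1 (fun j => P.pref j u v)
        have hc2 : (Finset.filter
            (fun i => ∃ h : i ∈ t2, P.pref ((e2 ⟨i, h⟩ : ↥P.voters) : V) u v) t2).card =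
            (Finset.filter (fun i => P.pref i u v) P.voters).card :=
          card_filter_equiv_aux e2 (fun j => P.pref j u v)
        rw [hc1, hc2]
        have hPs : P.support u v =
            ((Finset.filter (fun i => P.pref i u v) P.voters).card : ℤ) := rfl
        rw [hPs]
        push_cast
        ring
      · rw [Finset.disjoint_left]
        intro a ha hb
        simp only [Finset.mem_filter] at ha hb
        exact Finset.disjoint_left.mp hd1 ha.1 hb.1
      · refine Finset.disjoint_union_left.mpr ⟨?_, ?_⟩
        · rw [Finset.disjoint_left]
          intro a ha hb
          simp only [Finset.mem_filter] at ha hb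
          exact Finset.disjoint_left.mp hd2 ha.1 hb.1
        · rw [Finset.disjoint_left]
          intro a ha hb
          simp only [Finset.mem_filter] at ha hb
          exact Finset.disjoint_left.mp hd12 ha.1 hb.1
    show Profile.margin _ x y = _
    unfold Profile.margin
    rw [hsup, hsup]
    ring

private lemma margin_self {α V : Type*} (P : Profile α V) (x : α) : P.margin x x = 0 :=
  sub_self _

private lemma margin_antisymm {α V : Type*} (P : Profile α V) (x y : α) :
    P.margin x y = -P.margin y x := by
  unfold Profile.margin; ring

private lemma margin_insert_voter {α V : Type*} (Q P' : Profile α V) (j : V)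
    (hj : j ∉ Q.voters) (hv : P'.voters = insert j Q.voters)
    (hagree : ∀ i ∈ Q.voters, ∀ u v : α, P'.pref i u v ↔ Q.pref i u v) (x y : α) :
    |P'.margin x y - Q.margin x y| ≤ 1 := by
  classical
  have hsup : ∀ u v : α, P'.support u v =
      Q.support u v + (if P'.pref j u v then 1 else 0) := by
    intro u v
    unfold Profile.support
    rw [hv, Finset.filter_insert]
    have hfc : (Q.voters.filter fun i => P'.pref i u v) =
        Q.voters.filter fun i => Q.pref i u v := by
      ext i
      simp only [Finset.mem_filter]
      exact and_congr_right fun hi => hagree i hi u v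
    split_ifs with h
    · rw [Finset.card_insert_of_notMem (fun hmem => hj (Finset.filter_subset _ _ hmem)), hfc]
      push_cast; ring
    · rw [hfc]; ring
  unfold Profile.margin
  rw [hsup, hsup]
  split_ifs <;> rw [abs_le] <;> constructor <;> linarith

/-- ordinal margin invariance + single-voter resolvability imply a
unique winner on any profile whose ordinal margin graph is a linearly
edge-ordered tournament (all margins nonzero, pairwise distinct in absolute value). -/
theorem unique_winner_on_edge_ordered_tournament {α V : Type*} [Fintype α] [DecidableEq α]
    [Infinite V] (F : Profile α V → Finset α)
    (hne : ∀ P : Profile α V, (F P).Nonempty)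
    -- ordinal margin invariance
    (hOMI : ∀ P P' : Profile α V, omgEq P P' → F P = F P')
    -- single-voter resolvability
    (hres : ∀ P : Profile α V, 1 < (F P).card →
      ∃ (P' : Profile α V) (j : V), j ∉ P.voters ∧ P'.voters = insert j P.voters ∧
        (∀ i ∈ P.voters, ∀ u v : α, P'.pref i u v ↔ P.pref i u v) ∧
        ((∀ x, ¬ P'.pref j x x) ∧ (∀ x y z, P'.pref j x y → P'.pref j y z → P'.pref j x z) ∧
          (∀ x y, x ≠ y → P'.pref j x y ∨ P'.pref j y x)) ∧
        (F P').card = 1) :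
    ∀ P : Profile α V,
      (∀ x y : α, x ≠ y → P.margin x y ≠ 0) →
      (∀ x y z w : α, x ≠ y → z ≠ w → ({x, y} : Finset α) ≠ {z, w} →
        |P.margin x y| ≠ |P.margin z w|) →
      (F P).card = 1 := by
  intro P h1 h2
  by_contra hcard
  have hpos : 0 < (F P).card := Finset.card_pos.mpr (hne P)
  have hgt : 1 < (F P).card := by omega
  obtain ⟨Q, hQ⟩ := exists_tripled P
  have hPQ : omgEq P Q := by
    refine ⟨fun x y => ?_, fun x y z w _ _ => ?_⟩
    · rw [hQ]
      constructor <;> intro h <;> linarith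
    · rw [hQ, hQ]
      constructor <;> intro h <;> linarith
  have hFQ : F P = F Q := hOMI P Q hPQ
  have hgtQ : 1 < (F Q).card := by rw [← hFQ]; exact hgt
  obtain ⟨P', j, hj, hv, hagree, _hlin, hone⟩ := hres Q hgtQ
  have habs : ∀ x y : α, -1 ≤ P'.margin x y - Q.margin x y ∧
      P'.margin x y - Q.margin x y ≤ 1 :=
    fun x y => abs_le.mp (margin_insert_voter Q P' j hj hv hagree x y)
  have hQP' : omgEq Q P' := by
    constructor
    · intro x y
      by_cases hxy : x = y
      · subst hxy
        rw [margin_self, margin_self]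
      · have hm := h1 x y hxy
        have hd := habs x y
        have h3 := hQ x y
        omega
    · intro x y z w hp1 hp2
      have hx_ne : x ≠ y := by
        rintro rfl; rw [margin_self] at hp1; exact lt_irrefl 0 hp1
      have hz_ne : z ≠ w := by
        rintro rfl; rw [margin_self] at hp2; exact lt_irrefl 0 hp2
      by_cases hpair : ({x, y} : Finset α) = {z, w}
      · have hx : x = z ∨ x = w := by
          have : x ∈ ({z, w} : Finset α) := by
            rw [← hpair]; simp
          simpa using this
        rcases hx with rfl | rfl
        · -- x = z
          have hy : y = w := by
            have : y ∈ ({x, w} : Finset α) := by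
              rw [← hpair]; simp
            rcases Finset.mem_insert.mp this with h | h
            · exact absurd h.symm hx_ne
            · simpa using h
          subst hy
          exact iff_of_false (lt_irrefl _) (lt_irrefl _)
        · -- x = w
          have hz : z = y := by
            have : z ∈ ({x, y} : Finset α) := by
              rw [hpair]; simp
            rcases Finset.mem_insert.mp this with h | h
            · exact absurd h hz_ne
            · simpa using h
          subst hz
          rw [margin_antisymm Q z x] at hp2
          exact absurd hp1 (by linarith)
      · have hne_abs := h2 x y z w hx_ne hz_ne hpair
        have e1 := hQ x y
        have e2 := hQ z w
        have d1 := habs x y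
        have d2 := habs z w
        have hP1 : 0 < P.margin x y := by omega
        have hP2 : 0 < P.margin z w := by omega
        rw [abs_of_pos hP1, abs_of_pos hP2] at hne_abs
        omega
  have hFQP' : F Q = F P' := hOMI Q P' hQP'
  rw [hFQP', hone] at hgtQ
  exact absurd hgtQ (by norm_num)
end
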